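/- Let X be a topological space and let ι : C(X,ℝ) → C(X,ℂ) be the ring homomorphism given by postcomposition with the inclusion ℝ ↪ ℂ. Then the map c : MSpec(C(X,ℂ)) → MSpec(C(X,ℝ)) sending a maximal ideal 𝔐 to its contraction ι⁻¹(𝔐) (which is maximal) is a homeomorphism, where both maximal spectra carry the subspace topology inherited from the Zariski topology on the respective prime spectra. -/

import Mathlib

/-! The Zariski topology on the maximal spectrum, induced from the prime spectrum. -/
noncomputable instance maximalSpectrum.topologicalSpace (R : Type*) [CommRing R] :
    TopologicalSpace (MaximalSpectrum R) :=
  TopologicalSpace.induced MaximalSpectrum.toPrimeSpectrum inferInstance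

/-- Postcomposition with the inclusion `ℝ ↪ ℂ`, as a ring homomorphism
`C(X, ℝ) →+* C(X, ℂ)`. -/
noncomputable def iotaC (X : Type*) [TopologicalSpace X] : C(X, ℝ) →+* C(X, ℂ) :=
  Complex.ofRealHom.compLeftContinuous X Complex.continuous_ofReal

section aux
variable (X : Type*) [TopologicalSpace X]

lemma iotaC_apply (f : C(X, ℝ)) (x : X) : iotaC X f x = (f x : ℂ) := rfl

lemma iotaC_injective : Function.Injective (iotaC X) := by
  intro f g h
  ext x
  have := congrFun (congrArg (fun u : C(X, ℂ) => (u : X → ℂ)) h) x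
  simpa [iotaC_apply] using this

noncomputable def reC (f : C(X, ℂ)) : C(X, ℝ) :=
  ⟨fun x => (f x).re, Complex.continuous_re.comp f.continuous⟩

noncomputable def imC (f : C(X, ℂ)) : C(X, ℝ) :=
  ⟨fun x => (f x).im, Complex.continuous_im.comp f.continuous⟩

lemma one_add_sq_isUnit (t : C(X, ℝ)) : IsUnit (1 + t * t) := by
  have hne : ∀ x, (1 : ℝ) + t x * t x ≠ 0 := fun x =>
    ne_of_gt (by nlinarith [sq_nonneg (t x)])
  refine IsUnit.of_mul_eq_one
    ⟨fun x => (1 + t x * t x)⁻¹,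
      ((continuous_const.add (t.continuous.mul t.continuous)).inv₀ hne)⟩ ?_
  ext x
  simp [mul_inv_cancel₀ (hne x)]

lemma sum_sq_mem (m : Ideal C(X, ℝ)) (hm : m.IsMaximal) (g h : C(X, ℝ))
    (hgh : g * g + h * h ∈ m) : g ∈ m ∧ h ∈ m := by
  have key : ∀ a b : C(X, ℝ), a * a + b * b ∈ m → a ∈ m := by
    intro a b hab
    by_contra ha
    obtain ⟨c, y, hy, h1⟩ := hm.exists_inv ha
    have hy' : y = 1 - c * a := by linear_combination h1
    have h2 : (1 : C(X, ℝ)) + (b * c) * (b * c) =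
        (a * a + b * b) * (c * c) + y * (1 + a * c) := by
      rw [hy']; ring
    have hmem : (1 : C(X, ℝ)) + (b * c) * (b * c) ∈ m := by
      rw [h2]
      exact m.add_mem (m.mul_mem_right _ hab) (m.mul_mem_right _ hy)
    exact hm.ne_top (Ideal.eq_top_of_isUnit_mem m hmem (one_add_sq_isUnit X (b * c)))
  exact ⟨key g h hgh, key h g (by rwa [add_comm] at hgh)⟩

lemma mul_star_eq (f : C(X, ℂ)) :
    f * star f = iotaC X (reC X f * reC X f + imC X f * imC X f) := by
  ext x
  simp only [ContinuousMap.mul_apply, ContinuousMap.star_apply, iotaC_apply]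
  rw [show star (f x) = (starRingEnd ℂ) (f x) from rfl, Complex.mul_conj]
  push_cast
  simp [Complex.normSq_apply, reC, imC]

lemma decomp (f : C(X, ℂ)) :
    f = iotaC X (reC X f) + iotaC X (imC X f) * ContinuousMap.const X Complex.I := by
  ext x
  simp only [ContinuousMap.add_apply, ContinuousMap.mul_apply, ContinuousMap.const_apply,
    iotaC_apply]
  exact (Complex.re_add_im (f x)).symm

lemma iotaC_isIntegral : (iotaC X).IsIntegral := by
  intro f
  refine ⟨Polynomial.X ^ 2 - Polynomial.C (reC X f + reC X f) * Polynomial.X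
      + Polynomial.C (reC X f * reC X f + imC X f * imC X f), ?_, ?_⟩
  · have : Polynomial.Monic (Polynomial.X ^ 2
        - (Polynomial.C (reC X f + reC X f) * Polynomial.X
          - Polynomial.C (reC X f * reC X f + imC X f * imC X f))) := by
      apply Polynomial.monic_X_pow_sub
      refine lt_of_le_of_lt (Polynomial.degree_sub_le _ _) ?_
      rw [sup_lt_iff]
      constructor
      · exact lt_of_le_of_lt (Polynomial.degree_C_mul_X_le _)
          (by norm_num)
      · exact lt_of_le_of_lt Polynomial.degree_C_le (by norm_num)
    convert this using 1
    · rfl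
    ring
  · simp only [Polynomial.eval₂_add, Polynomial.eval₂_sub, Polynomial.eval₂_mul,
      Polynomial.eval₂_pow, Polynomial.eval₂_X, Polynomial.eval₂_C, map_add, map_mul]
    ext x
    simp only [ContinuousMap.add_apply, ContinuousMap.sub_apply, ContinuousMap.mul_apply,
      ContinuousMap.pow_apply, ContinuousMap.zero_apply, iotaC_apply]
    have h1 : ((reC X f) x : ℂ) + ((reC X f) x : ℂ) = f x + (starRingEnd ℂ) (f x) := by
      rw [Complex.add_conj]; simp [reC]; ring
    have h3 : (((reC X f) x : ℂ) * ((reC X f) x : ℂ) + ((imC X f) x : ℂ) * ((imC X f) x : ℂ))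
        = f x * (starRingEnd ℂ) (f x) := by
      rw [Complex.mul_conj, Complex.normSq_apply]
      push_cast
      simp [reC, imC]
    push_cast
    rw [h1, h3]
    ring

end aux

/-- The map `c : MSpec (C(X, ℂ)) → MSpec (C(X, ℝ))` sending a maximal ideal to its (maximal)
contraction along postcomposition with `ℝ ↪ ℂ` is a homeomorphism, where both maximal spectra
carry the subspace topology inherited from the Zariski topology. -/
theorem stmt13 (X : Type*) [TopologicalSpace X] :
    ∃ h : ∀ M : Ideal C(X, ℂ), M.IsMaximal → (M.comap (iotaC X)).IsMaximal,
      IsHomeomorph (fun M : MaximalSpectrum C(X, ℂ) =>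
        (⟨M.asIdeal.comap (iotaC X), h M.asIdeal M.isMaximal⟩ : MaximalSpectrum C(X, ℝ))) := by
  letI : Algebra C(X, ℝ) C(X, ℂ) := (iotaC X).toAlgebra
  haveI : Algebra.IsIntegral C(X, ℝ) C(X, ℂ) := ⟨iotaC_isIntegral X⟩
  have halg : algebraMap C(X, ℝ) C(X, ℂ) = iotaC X := rfl
  have hmax : ∀ M : Ideal C(X, ℂ), M.IsMaximal → (M.comap (iotaC X)).IsMaximal := by
    intro M hM
    haveI := hM
    have := Ideal.isMaximal_comap_of_isIntegral_of_isMaximal (R := C(X, ℝ)) (S := C(X, ℂ)) M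
    rwa [halg] at this
  refine ⟨hmax, ?_⟩
  set F : MaximalSpectrum C(X, ℂ) → MaximalSpectrum C(X, ℝ) :=
    fun M => ⟨M.asIdeal.comap (iotaC X), hmax M.asIdeal M.isMaximal⟩ with hF
  -- key injectivity lemma
  have hle : ∀ M N : Ideal C(X, ℂ), M.IsMaximal → N.IsMaximal →
      M.comap (iotaC X) = N.comap (iotaC X) → M ≤ N := by
    intro M N hM hN hMN f hf
    have h1 : f * star f ∈ M := M.mul_mem_right _ hf
    rw [mul_star_eq] at h1
    have h2 : reC X f * reC X f + imC X f * imC X f ∈ N.comap (iotaC X) := by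
      rw [← hMN]; exact h1
    obtain ⟨hr, hi⟩ := sum_sq_mem X (N.comap (iotaC X)) (hmax N hN) _ _ h2
    rw [decomp X f]
    exact N.add_mem hr (N.mul_mem_right _ hi)
  have hinj : Function.Injective F := by
    intro M N h
    have h' : M.asIdeal.comap (iotaC X) = N.asIdeal.comap (iotaC X) :=
      congrArg MaximalSpectrum.asIdeal h
    exact MaximalSpectrum.ext (le_antisymm
      (hle _ _ M.isMaximal N.isMaximal h') (hle _ _ N.isMaximal M.isMaximal h'.symm))
  have hker : RingHom.ker (iotaC X) = ⊥ :=
    (RingHom.injective_iff_ker_eq_bot _).mp (iotaC_injective X)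
  have hsurj : Function.Surjective F := by
    intro m
    obtain ⟨Q, hQmax, hQ⟩ := Ideal.exists_ideal_over_maximal_of_isIntegral
      (R := C(X, ℝ)) (S := C(X, ℂ)) m.asIdeal (by rw [halg, hker]; exact bot_le)
    rw [halg] at hQ
    exact ⟨⟨Q, hQmax⟩, MaximalSpectrum.ext hQ⟩
  have hbij : Function.Bijective F := ⟨hinj, hsurj⟩
  have hcomm : (MaximalSpectrum.toPrimeSpectrum ∘ F) =
      (PrimeSpectrum.comap (iotaC X)) ∘ MaximalSpectrum.toPrimeSpectrum := rfl
  have hcont : Continuous F := by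
    apply continuous_induced_rng.2
    rw [hcomm]
    exact (PrimeSpectrum.continuous_comap (iotaC X)).comp continuous_induced_dom
  have hclosed : IsClosedMap F := by
    intro C hC
    obtain ⟨D, hD, rfl⟩ := isClosed_induced_iff.mp hC
    have himg : F '' (MaximalSpectrum.toPrimeSpectrum ⁻¹' D) =
        MaximalSpectrum.toPrimeSpectrum ⁻¹' (PrimeSpectrum.comap (iotaC X) '' D) := by
      ext m
      constructor
      · rintro ⟨M, hM, rfl⟩
        exact ⟨M.toPrimeSpectrum, hM, rfl⟩
      · rintro ⟨P, hPD, hPm⟩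
        obtain ⟨Mid, hMmax, hPM⟩ := Ideal.exists_le_maximal P.asIdeal P.isPrime.ne_top
        refine ⟨⟨Mid, hMmax⟩, ?_, ?_⟩
        · have hspec : P ⤳ MaximalSpectrum.toPrimeSpectrum ⟨Mid, hMmax⟩ :=
            (PrimeSpectrum.le_iff_specializes _ _).mp hPM
          exact hspec.mem_closed hD hPD
        · have hle' : m.asIdeal ≤ Mid.comap (iotaC X) := by
            have : P.asIdeal.comap (iotaC X) = m.asIdeal :=
              congrArg PrimeSpectrum.asIdeal hPm
            rw [← this]
            exact Ideal.comap_mono hPM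
          exact (MaximalSpectrum.ext
            ((m.isMaximal.eq_of_le (hmax Mid hMmax).ne_top hle'))).symm
    rw [himg]
    exact ((PrimeSpectrum.isClosedMap_comap_of_isIntegral _ (iotaC_isIntegral X)) D hD).preimage
      continuous_induced_dom
  have hopen : IsOpenMap F := by
    intro U hU
    rw [← compl_compl (F '' U), ← Set.image_compl_eq hbij]
    exact ((hclosed _ hU.isClosed_compl).isOpen_compl)
  exact ⟨hcont, hopen, hbij⟩
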